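/- arXiv:1904.06543 — 3 statements merged into one kernel-verified Lean document; each statement's English description precedes it below -/
import Mathlib

section
/- For every bin covering instance s : ι → ℝ on a finite index set with 0 < s i < 1 for all i, letting S = ∑ᵢ s i be the total size of the items and U = opt(s) the optimum, we have U ≤ S and S < 2·U + 1. (In particular there is an optimal solution in which every covered bin has load in [1,2) and all remaining items have total size less than 1.) -/
open Finset

open scoped Classical in
/-- The number of covered bins of a packing `P` of a bin covering instance `s`:
a bin `b` is covered if the total size of items assigned to it is at least `1`. -/
noncomputable def coveredCount {ι : Type*} [Fintype ι] (s : ι → ℝ) (P : ι → ℕ) : ℕ :=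
  ((Finset.univ.image P).filter
    (fun b => 1 ≤ ∑ i ∈ Finset.univ.filter (fun i => P i = b), s i)).card

/-- The bin covering optimum: the maximum number of covered bins over all packings. -/
noncomputable def binCoveringOpt {ι : Type*} [Fintype ι] (s : ι → ℝ) : ℕ :=
  sSup {n | ∃ P : ι → ℕ, n = coveredCount s P}

open scoped Classical in
lemma coveredCount_le_sum {ι : Type*} [Fintype ι] (s : ι → ℝ)
    (hpos : ∀ i, 0 ≤ s i) (P : ι → ℕ) :
    (coveredCount s P : ℝ) ≤ ∑ i, s i := by
  classical
  set F := ((Finset.univ.image P).filter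
    (fun b => 1 ≤ ∑ i ∈ Finset.univ.filter (fun i => P i = b), s i)) with hF
  have h1 : (F.card : ℝ) ≤ ∑ b ∈ F, ∑ i ∈ Finset.univ.filter (fun i => P i = b), s i := by
    calc (F.card : ℝ) = ∑ _b ∈ F, (1:ℝ) := by simp
    _ ≤ _ := Finset.sum_le_sum (fun b hb => (Finset.mem_filter.mp hb).2)
  have h2 : ∑ b ∈ F, ∑ i ∈ Finset.univ.filter (fun i => P i = b), s i ≤
      ∑ b ∈ Finset.univ.image P, ∑ i ∈ Finset.univ.filter (fun i => P i = b), s i := by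
    apply Finset.sum_le_sum_of_subset_of_nonneg (Finset.filter_subset _ _)
    intro b _ _
    exact Finset.sum_nonneg fun i _ => hpos i
  have h3 : ∑ b ∈ Finset.univ.image P, ∑ i ∈ Finset.univ.filter (fun i => P i = b), s i
      = ∑ i, s i := by
    exact Finset.sum_fiberwise_of_maps_to (fun i _ => Finset.mem_image_of_mem P (Finset.mem_univ i)) s
  exact h1.trans (h2.trans_eq h3)

open scoped Classical in
lemma greedy {ι : Type*} [Fintype ι] (s : ι → ℝ) (hs : ∀ i, 0 < s i ∧ s i < 1) :
    ∀ t : Finset ι, ∃ (k : ℕ) (P : ι → ℕ),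
      (∀ i ∈ t, P i ≤ k) ∧
      (∀ j, 1 ≤ j → j ≤ k → 1 ≤ ∑ i ∈ t.filter (fun i => P i = j), s i ∧
          ∑ i ∈ t.filter (fun i => P i = j), s i < 2) ∧
      ∑ i ∈ t.filter (fun i => P i = 0), s i < 1 := by
  classical
  intro t
  induction t using Finset.strongInduction with
  | _ t ih =>
  by_cases h1 : ∑ i ∈ t, s i < 1
  · refine ⟨0, fun _ => 0, fun i _ => le_refl 0, fun j hj hj' => by omega, ?_⟩
    simpa using h1
  · push_neg at h1
    -- pick a minimal-card subset u of t with sum ≥ 1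
    have hne : (t.powerset.filter (fun u => 1 ≤ ∑ i ∈ u, s i)).Nonempty :=
      ⟨t, Finset.mem_filter.mpr ⟨Finset.mem_powerset_self t, h1⟩⟩
    obtain ⟨u, hu, humin⟩ := Finset.exists_min_image _ Finset.card hne
    rw [Finset.mem_filter, Finset.mem_powerset] at hu
    obtain ⟨hut, husum⟩ := hu
    have hune : u.Nonempty := by
      rcases Finset.eq_empty_or_nonempty u with h | h
      · exfalso; rw [h] at husum; simp at husum; linarith
      · exact h
    have herase : ∀ i ∈ u, ∑ j ∈ u.erase i, s j < 1 := by
      intro i hi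
      by_contra hc
      push_neg at hc
      have hmem : u.erase i ∈ t.powerset.filter (fun v => 1 ≤ ∑ j ∈ v, s j) :=
        Finset.mem_filter.mpr ⟨Finset.mem_powerset.mpr ((Finset.erase_subset _ _).trans hut), hc⟩
      have := humin _ hmem
      have hlt : (u.erase i).card < u.card := Finset.card_erase_lt_of_mem hi
      omega
    obtain ⟨i0, hi0⟩ := id hune
    have husum2 : ∑ i ∈ u, s i < 2 := by
      have := herase i0 hi0
      have h2 := (hs i0).2
      have := Finset.sum_erase_add u s hi0
      linarith
    have hss : t \ u ⊂ t := by
      apply Finset.sdiff_ssubset hut hune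
    obtain ⟨k, P, hP1, hP2, hP3⟩ := ih (t \ u) hss
    refine ⟨k + 1, fun i => if i ∈ u then k + 1 else P i, ?_, ?_, ?_⟩
    · intro i hit
      by_cases hiu : i ∈ u
      · simp [hiu]
      · simp only [hiu, if_neg]
        have := hP1 i (Finset.mem_sdiff.mpr ⟨hit, hiu⟩)
        simp [hiu]
        omega
    · intro j hj hj'
      by_cases hjk : j = k + 1
      · have hfu : t.filter (fun i => (if i ∈ u then k + 1 else P i) = j) = u := by
          ext i
          simp only [Finset.mem_filter]
          constructor
          · rintro ⟨hit, hif⟩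
            by_contra hiu
            simp only [hiu, if_neg] at hif
            have := hP1 i (Finset.mem_sdiff.mpr ⟨hit, hiu⟩)
            simp at hif
            omega
          · intro hiu
            exact ⟨hut hiu, by simp [hiu, hjk]⟩
        rw [hfu]
        exact ⟨husum, husum2⟩
      · have hjk' : j ≤ k := by omega
        have hfu : t.filter (fun i => (if i ∈ u then k + 1 else P i) = j) =
            (t \ u).filter (fun i => P i = j) := by
          ext i
          simp only [Finset.mem_filter, Finset.mem_sdiff]
          constructor
          · rintro ⟨hit, hif⟩
            by_cases hiu : i ∈ u
            · simp [hiu] at hif; omega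
            · simp [hiu] at hif; exact ⟨⟨hit, hiu⟩, hif⟩
          · rintro ⟨⟨hit, hiu⟩, hif⟩
            exact ⟨hit, by simp [hiu, hif]⟩
        rw [hfu]
        exact hP2 j hj hjk'
    · have hfu : t.filter (fun i => (if i ∈ u then k + 1 else P i) = 0) =
          (t \ u).filter (fun i => P i = 0) := by
        ext i
        simp only [Finset.mem_filter, Finset.mem_sdiff]
        constructor
        · rintro ⟨hit, hif⟩
          by_cases hiu : i ∈ u
          · simp [hiu] at hif
          · simp [hiu] at hif; exact ⟨⟨hit, hiu⟩, hif⟩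
        · rintro ⟨⟨hit, hiu⟩, hif⟩
          exact ⟨hit, by simp [hiu, hif]⟩
      rw [hfu]
      exact hP3

/-- for every bin covering instance with item sizes in `(0,1)`,
the optimum `U` and the total size `S` satisfy `U ≤ S` and `S < 2U + 1`. -/
theorem binCoveringOpt_size_bounds {ι : Type*} [Fintype ι] (s : ι → ℝ)
    (hs : ∀ i, 0 < s i ∧ s i < 1) :
    (binCoveringOpt s : ℝ) ≤ ∑ i, s i ∧
    ∑ i, s i < 2 * (binCoveringOpt s : ℝ) + 1 := by
  classical
  have hpos : ∀ i, 0 ≤ s i := fun i => (hs i).1.le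
  set A := {n | ∃ P : ι → ℕ, n = coveredCount s P} with hA
  have hAne : A.Nonempty := ⟨coveredCount s (fun _ => 0), fun _ => 0, rfl⟩
  have hAbdd : BddAbove A := by
    refine ⟨⌊∑ i, s i⌋₊, fun n hn => ?_⟩
    obtain ⟨P, rfl⟩ := hn
    exact Nat.le_floor (coveredCount_le_sum s hpos P)
  have hUmem : binCoveringOpt s ∈ A := Nat.sSup_mem hAne hAbdd
  obtain ⟨P0, hP0⟩ := hUmem
  constructor
  · rw [hP0]
    exact coveredCount_le_sum s hpos P0
  · obtain ⟨k, P, hP1, hP2, hP3⟩ := greedy s hs Finset.univ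
    -- k ≤ coveredCount s P
    have hsub : Finset.Icc 1 k ⊆ ((Finset.univ.image P).filter
        (fun b => 1 ≤ ∑ i ∈ Finset.univ.filter (fun i => P i = b), s i)) := by
      intro j hj
      rw [Finset.mem_Icc] at hj
      have hsum := (hP2 j hj.1 hj.2).1
      have hne : (Finset.univ.filter (fun i => P i = j)).Nonempty := by
        by_contra hc
        rw [Finset.not_nonempty_iff_eq_empty] at hc
        rw [hc] at hsum
        simp at hsum
        linarith
      obtain ⟨i, hi⟩ := hne
      rw [Finset.mem_filter] at hi
      exact Finset.mem_filter.mpr ⟨Finset.mem_image.mpr ⟨i, Finset.mem_univ i, hi.2⟩, hsum⟩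
    have hkle : k ≤ coveredCount s P := by
      have := Finset.card_le_card hsub
      simpa [coveredCount] using this
    have hcov : coveredCount s P ≤ binCoveringOpt s :=
      le_csSup hAbdd ⟨P, rfl⟩
    have hkU : k ≤ binCoveringOpt s := hkle.trans hcov
    -- S < 2k + 1
    have hfib : ∑ i, s i = ∑ j ∈ Finset.range (k + 1),
        ∑ i ∈ Finset.univ.filter (fun i => P i = j), s i := by
      exact (Finset.sum_fiberwise_of_maps_to
        (fun i _ => Finset.mem_range.mpr (Nat.lt_succ_of_le (hP1 i (Finset.mem_univ i)))) s).symm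
    have hbound : ∑ j ∈ Finset.range (k + 1),
        ∑ i ∈ Finset.univ.filter (fun i => P i = j), s i < 2 * k + 1 := by
      rw [Finset.sum_range_succ']
      have h0 : ∑ i ∈ Finset.univ.filter (fun i => P i = 0), s i < 1 := hP3
      have hrest : ∑ j ∈ Finset.range k,
          ∑ i ∈ Finset.univ.filter (fun i => P i = j + 1), s i ≤ 2 * k := by
        calc ∑ j ∈ Finset.range k, ∑ i ∈ Finset.univ.filter (fun i => P i = j + 1), s i
            ≤ ∑ _j ∈ Finset.range k, (2:ℝ) := by
              apply Finset.sum_le_sum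
              intro j hj
              rw [Finset.mem_range] at hj
              exact ((hP2 (j+1) (by omega) (by omega)).2).le
          _ = 2 * k := by simp [mul_comm]
      linarith
    have : (∑ i, s i) < 2 * (k : ℝ) + 1 := by
      rw [hfib]; exact_mod_cast hbound
    have hcast : (k : ℝ) ≤ (binCoveringOpt s : ℝ) := by exact_mod_cast hkU
    linarith
end

section
/- Let N ≥ 1 be an integer and 1 ≤ k ≤ N, and set r_k = (N−k+1)·ε·(1+(k−1)(N+1)) = 1 − huge(k). If ℓ : {1,…,m} → {1,…,N} is any assignment of levels to m tiny items such that ∑_{j=1}^{m} tiny(ℓ(j)) = r_k, then m ≥ N − k + 1. (Indeed, each tiny(i)/ε is congruent to 1 modulo N+1 while r_k/ε is congruent to N−k+1 modulo N+1, so m ≡ N−k+1 (mod N+1).) -/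
/-- `ε = 1/(N+1)^4`. -/
noncomputable def eps (N : ℕ) : ℝ := 1 / ((N : ℝ) + 1) ^ 4

/-- The huge item of level `i`: `1 − (N−i+1)·ε·(1+(i−1)(N+1))`. -/
noncomputable def hugeItem (N i : ℕ) : ℝ :=
  1 - ((N : ℝ) - (i : ℝ) + 1) * eps N * (1 + ((i : ℝ) - 1) * ((N : ℝ) + 1))

/-- The type-A large item of level `i`: `1/2 + i(N+1)ε`. -/
noncomputable def largeA (N i : ℕ) : ℝ := 1 / 2 + (i : ℝ) * ((N : ℝ) + 1) * eps N

/-- The type-B large item of level `i`: `largeA(i) + ε`. -/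
noncomputable def largeB (N i : ℕ) : ℝ := largeA N i + eps N

/-- The type-A medium item of level `i`: `1/2 − i(N+1)ε`. -/
noncomputable def mediumA (N i : ℕ) : ℝ := 1 / 2 - (i : ℝ) * ((N : ℝ) + 1) * eps N

/-- The type-B medium item of level `i`: `mediumA(i) − ε`. -/
noncomputable def mediumB (N i : ℕ) : ℝ := mediumA N i - eps N

/-- The tiny item of level `i`: `ε·(1+(i−1)(N+1))`. -/
noncomputable def tinyItem (N i : ℕ) : ℝ :=
  eps N * (1 + ((i : ℝ) - 1) * ((N : ℝ) + 1))

/-- if `m` tiny items (with levels in `{1,…,N}`) have total size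
exactly `r_k = (N−k+1)·ε·(1+(k−1)(N+1)) = 1 − huge(k)`, then `m ≥ N − k + 1`. -/
theorem tiny_cover_needs_many_items (N : ℕ) (hN : 1 ≤ N) (k : ℕ)
    (hk1 : 1 ≤ k) (hkN : k ≤ N) (m : ℕ) (ℓ : Fin m → ℕ)
    (hℓ : ∀ j, 1 ≤ ℓ j ∧ ℓ j ≤ N)
    (hsum : ∑ j, tinyItem N (ℓ j)
      = ((N : ℝ) - (k : ℝ) + 1) * eps N * (1 + ((k : ℝ) - 1) * ((N : ℝ) + 1))) :
    N - k + 1 ≤ m := by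
  have heps : eps N ≠ 0 := by
    unfold eps
    positivity
  -- real equation without eps
  have hR : (∑ j, (1 + ((ℓ j : ℝ) - 1) * ((N : ℝ) + 1)))
      = ((N : ℝ) - (k : ℝ) + 1) * (1 + ((k : ℝ) - 1) * ((N : ℝ) + 1)) := by
    have h2 : eps N * (∑ j, (1 + ((ℓ j : ℝ) - 1) * ((N : ℝ) + 1)))
        = eps N * (((N : ℝ) - (k : ℝ) + 1) * (1 + ((k : ℝ) - 1) * ((N : ℝ) + 1))) := by
      rw [Finset.mul_sum]
      rw [show ∀ x : ℝ, eps N * (((N : ℝ) - (k : ℝ) + 1) * x)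
          = ((N : ℝ) - (k : ℝ) + 1) * eps N * x from fun x => by ring]
      rw [← hsum]
      rfl
    exact mul_left_cancel₀ heps h2
  -- integer version
  have hZ : (∑ j, (1 + ((ℓ j : ℤ) - 1) * ((N : ℤ) + 1)))
      = ((N : ℤ) - (k : ℤ) + 1) * (1 + ((k : ℤ) - 1) * ((N : ℤ) + 1)) := by
    have := hR
    exact_mod_cast this
  -- pass to ZMod (N+1)
  have hzm : ((m : ZMod (N + 1)))
      = (((N : ℤ) - (k : ℤ) + 1 : ℤ) : ZMod (N + 1)) := by
    have hcast := congrArg (fun z : ℤ => (z : ZMod (N + 1))) hZ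
    simp only [Int.cast_sum, Int.cast_mul, Int.cast_add, Int.cast_sub, Int.cast_one,
      Int.cast_natCast] at hcast
    have hNz : ((N : ZMod (N + 1)) + 1) = 0 := by
      have : ((N + 1 : ℕ) : ZMod (N + 1)) = 0 := ZMod.natCast_self _
      push_cast at this
      exact this
    rw [hNz] at hcast
    simp at hcast
    push_cast
    exact hcast
  by_contra hlt
  push_neg at hlt
  have ht : (((N - k + 1 : ℕ) : ℤ)) = (N : ℤ) - (k : ℤ) + 1 := by
    push_cast [Nat.cast_sub hkN]
    ring
  have hzm2 : ((m : ZMod (N + 1))) = (((N - k + 1 : ℕ)) : ZMod (N + 1)) := by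
    rw [hzm, ← ht]
    push_cast
    ring
  have hmlt : m < N + 1 := lt_of_lt_of_le hlt (by omega)
  have htlt : N - k + 1 < N + 1 := by omega
  have : m = N - k + 1 := by
    have h1 := ZMod.val_cast_of_lt (show m < N + 1 by omega)
    have h2 := ZMod.val_cast_of_lt htlt
    rw [← h1, ← h2, hzm2]
  omega
end

section
/- Let ε > 0 and k ≥ 1, and let S₁, …, S_k, U₁, …, U_k, Δ₁, …, Δ_k be reals with Δ_i > 0, S_i ≤ 3·U_i and U_i ≤ 3·Δ_i for all i, Δ_{i+1} ≥ (1+ε)·Δ_i for all 1 ≤ i ≤ k−1, and Δ_k ≤ S_k. Then ∑_{i=1}^{k} S_i ≤ 9·(1 + 1/ε)·S_k. -/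
open Finset

theorem sum_Icc_le_of_geometric_growth {ε : ℝ} (hε : 0 < ε) {a : ℕ → ℝ} {m n : ℕ}
    (hm : 0 ≤ a m) (hmn : m ≤ n) (hgrow : ∀ i, m ≤ i → i < n → (1 + ε) * a i ≤ a (i + 1)) :
    ∑ i ∈ Icc m n, a i ≤ (1 + 1 / ε) * a n := by
  suffices h : ε * ∑ i ∈ Icc m n, a i ≤ (1 + ε) * a n by
    rw [one_add_div hε.ne', div_mul_eq_mul_div, le_div_iff₀ hε]
    linarith
  induction n, hmn using Nat.le_induction with
  | base => simp only [Icc_self, sum_singleton]; linarith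
  | succ n hmn ih =>
    have hn := hgrow n hmn n.lt_succ_self
    rw [sum_Icc_succ_top (by omega), mul_add]
    linarith [ih fun i hi hin => hgrow i hi (by omega)]

/-- amortized migration bound. If `S_i ≤ 3·U_i`, `U_i ≤ 3·Δ_i`,
the `Δ_i` are positive and grow by a factor of at least `1+ε`, and `Δ_k ≤ S_k`,
then `∑_{i=1}^{k} S_i ≤ 9·(1 + 1/ε)·S_k`. -/
theorem amortized_migration_bound (ε : ℝ) (hε : 0 < ε) (k : ℕ) (hk : 1 ≤ k)
    (S U Δ : ℕ → ℝ)
    (hΔpos : ∀ i, 1 ≤ i → i ≤ k → 0 < Δ i)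
    (hSU : ∀ i, 1 ≤ i → i ≤ k → S i ≤ 3 * U i)
    (hUΔ : ∀ i, 1 ≤ i → i ≤ k → U i ≤ 3 * Δ i)
    (hgrow : ∀ i, 1 ≤ i → i ≤ k - 1 → (1 + ε) * Δ i ≤ Δ (i + 1))
    (hΔS : Δ k ≤ S k) :
    ∑ i ∈ Finset.Icc 1 k, S i ≤ 9 * (1 + 1 / ε) * S k := by
  have hSΔ : ∀ i ∈ Icc 1 k, S i ≤ 9 * Δ i := fun i hi => by
    obtain ⟨h1, h2⟩ := mem_Icc.mp hi
    linarith [hSU i h1 h2, hUΔ i h1 h2]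
  have hΔsum : ∑ i ∈ Icc 1 k, Δ i ≤ (1 + 1 / ε) * Δ k :=
    sum_Icc_le_of_geometric_growth hε (hΔpos 1 le_rfl hk).le hk
      fun i hi hik => hgrow i hi (by omega)
  calc ∑ i ∈ Icc 1 k, S i
      ≤ ∑ i ∈ Icc 1 k, 9 * Δ i := sum_le_sum hSΔ
    _ = 9 * ∑ i ∈ Icc 1 k, Δ i := (mul_sum _ _ _).symm
    _ ≤ 9 * ((1 + 1 / ε) * Δ k) := by gcongr
    _ ≤ 9 * (1 + 1 / ε) * S k := by rw [← mul_assoc]; gcongr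
end
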